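/- Let 0 < γ < 1 and z ∈ [0,π]. Then the series g(γ,z) = ∑_{k=1}^{∞} l_k^{2,γ} · (cos(k·z) − 1) converges and g(γ,z) ≥ 0. -/

import Mathlib

/-- Grünwald–Letnikov coefficient `g_k^α = (-1)^k * binom(α,k)`. -/
noncomputable def gl (a : ℝ) (k : ℕ) : ℝ :=
  (-1 : ℝ) ^ k * (∏ j ∈ Finset.range k, (a - j)) / (Nat.factorial k : ℝ)

/-- Shifted Grünwald weights. -/
noncomputable def glw (a : ℝ) : ℕ → ℝ
  | 0 => a / 2 * gl a 0
  | (k+1) => a / 2 * gl a (k+1) + (2 - a) / 2 * gl a k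

/-- Second-order Lubich coefficients `l_m^{2,γ}`. -/
noncomputable def lub2 (g : ℝ) (m : ℕ) : ℝ :=
  (3/2 : ℝ) ^ g * ∑ k ∈ Finset.range (m+1), (1/3 : ℝ) ^ k * gl g k * gl g (m - k)

/-- The Toeplitz matrix `B_α` of size `(M-1) × (M-1)`. -/
noncomputable def Bmat (a : ℝ) (M : ℕ) : Matrix (Fin (M-1)) (Fin (M-1)) ℝ :=
  fun i j => if (j : ℕ) ≤ (i : ℕ) + 1 then glw a ((i : ℕ) + 1 - (j : ℕ)) else 0

/-- The symmetric matrix `A_α = B_α + B_αᵀ`. -/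
noncomputable def Amat (a : ℝ) (M : ℕ) : Matrix (Fin (M-1)) (Fin (M-1)) ℝ :=
  Bmat a M + (Bmat a M).transpose

open Finset Filter Topology Complex

lemma gl_zero (a : ℝ) : gl a 0 = 1 := by simp [gl]

lemma gl_succ (a : ℝ) (n : ℕ) :
    gl a (n + 1) = gl a n * ((n : ℝ) - a) / (n + 1) := by
  have h1 : ((Nat.factorial n : ℝ)) ≠ 0 := by positivity
  have h2 : ((n : ℝ) + 1) ≠ 0 := by positivity
  simp only [gl, Finset.prod_range_succ, pow_succ, Nat.factorial_succ]
  push_cast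
  field_simp
  ring

/-- partial product -/
noncomputable def Pp (g : ℝ) (N : ℕ) : ℝ := ∏ j ∈ Finset.range N, (1 - g / (j + 1))

lemma Pp_nonneg {g : ℝ} (h1 : g < 1) (N : ℕ) : 0 ≤ Pp g N := by
  apply Finset.prod_nonneg
  intro j _
  have hj : (0:ℝ) < (j:ℝ) + 1 := by positivity
  rw [sub_nonneg, div_le_one hj]
  have : (0:ℝ) ≤ (j:ℝ) := Nat.cast_nonneg j
  linarith

lemma gl_succ_eq {g : ℝ} (n : ℕ) :
    gl g (n + 1) = -(g / (n + 1)) * Pp g n := by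
  induction n with
  | zero => simp [gl_succ, gl_zero, Pp]
  | succ n ih =>
      rw [gl_succ, ih]
      simp only [Pp, Finset.prod_range_succ]
      have h1 : ((n : ℝ) + 1) ≠ 0 := by positivity
      have h2 : ((n : ℝ) + 1 + 1) ≠ 0 := by positivity
      push_cast
      field_simp

lemma sum_gl (g : ℝ) (N : ℕ) :
    ∑ k ∈ Finset.range (N + 1), gl g k = Pp g N := by
  induction N with
  | zero => simp [gl_zero, Pp]
  | succ N ih =>
      rw [Finset.sum_range_succ, ih, gl_succ_eq]
      simp only [Pp, Finset.prod_range_succ]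
      push_cast
      ring

lemma gl_succ_nonpos {g : ℝ} (h0 : 0 < g) (h1 : g < 1) (n : ℕ) : gl g (n + 1) ≤ 0 := by
  rw [gl_succ_eq]
  have := Pp_nonneg h1 n
  have : 0 ≤ g / ((n:ℝ)+1) := by positivity
  nlinarith [Pp_nonneg h1 n]

lemma sum_abs_gl_le {g : ℝ} (h0 : 0 < g) (h1 : g < 1) (n : ℕ) :
    ∑ k ∈ Finset.range n, |gl g k| ≤ 2 := by
  cases n with
  | zero => norm_num
  | succ N =>
      rw [Finset.sum_range_succ']
      have h2 : ∀ k ∈ Finset.range N, |gl g (k + 1)| = -gl g (k + 1) := fun k _ =>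
        abs_of_nonpos (gl_succ_nonpos h0 h1 k)
      rw [Finset.sum_congr rfl h2, gl_zero]
      have h3 : ∑ k ∈ Finset.range N, -gl g (k + 1) = -(∑ k ∈ Finset.range (N+1), gl g k - gl g 0) := by
        rw [Finset.sum_range_succ']
        push_cast [Finset.sum_neg_distrib]
        ring
      rw [h3, sum_gl, gl_zero]
      have := Pp_nonneg h1 N
      norm_num
      linarith

lemma summable_abs_gl {g : ℝ} (h0 : 0 < g) (h1 : g < 1) :
    Summable (fun k => |gl g k|) :=
  summable_of_sum_range_le (fun _ => abs_nonneg _) (sum_abs_gl_le h0 h1)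

lemma re_pos_ball {w : ℂ} (hw : w ∈ Metric.ball (0:ℂ) 1) : 0 < (1 - w).re := by
  have hb : ‖w‖ < 1 := by simpa using hw
  have h := abs_lt.mp ((Complex.abs_re_le_norm w).trans_lt hb)
  simp only [Complex.sub_re, Complex.one_re]
  linarith [h.2]

lemma diffOn_cpow (g : ℝ) : DifferentiableOn ℂ (fun w : ℂ => (1 - w) ^ (g : ℂ))
    (Metric.ball 0 1) := by
  intro w hw
  exact (((differentiableAt_const (1:ℂ)).sub differentiableAt_id).cpow
    (differentiableAt_const _) (Or.inl (re_pos_ball hw))).differentiableWithinAt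

lemma iteratedDeriv_cpow_eqOn (g : ℝ) (n : ℕ) :
    Set.EqOn (iteratedDeriv n (fun w : ℂ => (1 - w) ^ (g : ℂ)))
      (fun w : ℂ => ((-1 : ℂ) ^ n * ∏ j ∈ Finset.range n, ((g : ℂ) - j)) *
        (1 - w) ^ ((g : ℂ) - n)) (Metric.ball 0 1) := by
  induction n with
  | zero => intro w hw; simp
  | succ n ih =>
      intro w hw
      have hev : iteratedDeriv n (fun w : ℂ => (1 - w) ^ (g : ℂ)) =ᶠ[nhds w]
          (fun w : ℂ => ((-1 : ℂ) ^ n * ∏ j ∈ Finset.range n, ((g : ℂ) - j)) *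
            (1 - w) ^ ((g : ℂ) - n)) :=
        Filter.eventuallyEq_of_mem (Metric.isOpen_ball.mem_nhds hw) ih
      have hd : HasDerivAt (fun w : ℂ => (1 - w) ^ ((g:ℂ) - n))
          (((g:ℂ) - n) * (1 - w) ^ ((g:ℂ) - n - 1) * (-1)) w := by
        have h1 : HasDerivAt (fun w : ℂ => 1 - w) (-1) w := by
          simpa using ((hasDerivAt_id w).const_sub (1:ℂ))
        exact h1.cpow_const (Or.inl (re_pos_ball hw))
      show iteratedDeriv (n+1) (fun w : ℂ => (1 - w) ^ (g : ℂ)) w = _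
      rw [iteratedDeriv_succ, hev.deriv_eq, (hd.const_mul _).deriv]
      have hcast : ((g:ℂ) - (n:ℂ)) - 1 = (g:ℂ) - ((n:ℕ)+1 : ℕ) := by push_cast; ring
      simp only [Finset.prod_range_succ, pow_succ, hcast]
      ring

lemma hasSum_gl_cpow (g : ℝ) {ζ : ℂ} (hζ : ‖ζ‖ < 1) :
    HasSum (fun n => (gl g n : ℂ) * ζ ^ n) ((1 - ζ) ^ (g : ℂ)) := by
  have hmem : ζ ∈ Metric.ball (0:ℂ) 1 := by simpa using hζ
  have H := Complex.hasSum_taylorSeries_on_ball (diffOn_cpow g) hmem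
  have h0 : (0:ℂ) ∈ Metric.ball (0:ℂ) 1 := by simp
  refine H.congr_fun (fun n => ?_)
  rw [iteratedDeriv_cpow_eqOn g n h0]
  have hfac : ((Nat.factorial n : ℂ)) ≠ 0 := by
    exact_mod_cast Nat.cast_ne_zero.mpr (Nat.factorial_ne_zero n)
  simp only [sub_zero, smul_eq_mul, Complex.cpow_natCast]
  rw [Complex.one_cpow]
  unfold gl
  push_cast
  field_simp

lemma summable_norm_gl_mul {g : ℝ} (h0 : 0 < g) (h1 : g < 1) {c : ℂ} (hc : ‖c‖ ≤ 1)
    : Summable (fun n => ‖(gl g n : ℂ) * c ^ n‖) := by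
  apply Summable.of_nonneg_of_le (fun n => norm_nonneg _) ?_ (summable_abs_gl h0 h1)
  intro n
  rw [norm_mul]
  calc ‖(gl g n : ℂ)‖ * ‖c ^ n‖ ≤ ‖(gl g n : ℂ)‖ * 1 := by
        apply mul_le_mul_of_nonneg_left ?_ (norm_nonneg _)
        rw [norm_pow]
        exact pow_le_one₀ (norm_nonneg _) hc
    _ = |gl g n| := by rw [mul_one]; exact Complex.norm_real _
  
lemma hasSum_lub2_cpow {g : ℝ} (h0 : 0 < g) (h1 : g < 1) {ζ : ℂ} (hζ : ‖ζ‖ < 1) :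
    HasSum (fun m => (lub2 g m : ℂ) * ζ ^ m)
      ((((3/2:ℝ) ^ g : ℝ) : ℂ) * ((1 - ζ/3) ^ (g:ℂ) * (1 - ζ) ^ (g:ℂ))) := by
  set f : ℕ → ℂ := fun n => (gl g n : ℂ) * (ζ/3) ^ n with hf_def
  set q : ℕ → ℂ := fun n => (gl g n : ℂ) * ζ ^ n with hq_def
  have hζ3 : ‖ζ/3‖ < 1 := by
    rw [norm_div]
    simp only [Complex.norm_ofNat]
    rw [div_lt_one (by norm_num : (0:ℝ) < 3)]
    linarith
  have hf : HasSum f ((1 - ζ/3) ^ (g:ℂ)) := hasSum_gl_cpow g hζ3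
  have hq : HasSum q ((1 - ζ) ^ (g:ℂ)) := hasSum_gl_cpow g hζ
  have hfn : Summable (fun n => ‖f n‖) := summable_norm_gl_mul h0 h1 hζ3.le
  have hqn : Summable (fun n => ‖q n‖) := summable_norm_gl_mul h0 h1 hζ.le
  have hsum : Summable (fun n => ∑ kl ∈ Finset.HasAntidiagonal.antidiagonal n, f kl.1 * q kl.2) :=
    (summable_norm_sum_mul_antidiagonal_of_summable_norm hfn hqn).of_norm
  have heq : (∑' n, f n) * (∑' n, q n)
      = ∑' n, ∑ kl ∈ Finset.HasAntidiagonal.antidiagonal n, f kl.1 * q kl.2 :=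
    tsum_mul_tsum_eq_tsum_sum_antidiagonal_of_summable_norm hfn hqn
  have hcp : HasSum (fun n => ∑ kl ∈ Finset.HasAntidiagonal.antidiagonal n, f kl.1 * q kl.2)
      ((1 - ζ/3) ^ (g:ℂ) * (1 - ζ) ^ (g:ℂ)) := by
    have := hsum.hasSum
    rwa [← heq, hf.tsum_eq, hq.tsum_eq] at this
  have := hcp.mul_left ((((3/2:ℝ) ^ g : ℝ) : ℂ))
  apply this.congr_fun
  intro m
  rw [Finset.Nat.sum_antidiagonal_eq_sum_range_succ (fun a b => f a * q b)]
  have hterm : ∀ k ∈ Finset.range (m+1),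
      f k * q (m - k) = (((1/3 : ℝ)^k * gl g k * gl g (m-k) : ℝ) : ℂ) * ζ ^ m := by
    intro k hk
    have hk' : k ≤ m := Nat.lt_succ_iff.mp (Finset.mem_range.mp hk)
    simp only [hf_def, hq_def]
    rw [div_pow]
    have h3 : ((3:ℂ))^k ≠ 0 := by norm_num
    have hζpow : ζ ^ k * ζ ^ (m - k) = ζ ^ m := by
      rw [← pow_add, Nat.add_sub_cancel' hk']
    push_cast
    field_simp
    rw [← hζpow]
    have h13 : ((1/3:ℂ))^k * 3^k = 1 := by rw [← mul_pow]; norm_num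
    linear_combination (-((gl g k : ℂ) * ζ ^ k * ζ ^ (m - k) * (gl g (m - k) : ℂ))) * h13
  rw [Finset.sum_congr rfl hterm, ← Finset.sum_mul]
  rw [lub2]
  push_cast
  ring

lemma summable_abs_lub2 {g : ℝ} (h0 : 0 < g) (h1 : g < 1) :
    Summable (fun m => |lub2 g m|) := by
  set F : ℕ → ℝ := fun k => (1/3 : ℝ) ^ k * |gl g k| with hF
  set G : ℕ → ℝ := fun k => |gl g k| with hG
  have hF0 : ∀ k, 0 ≤ F k := fun k => by positivity
  have hG0 : ∀ k, 0 ≤ G k := fun k => abs_nonneg _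
  have hFs : Summable F := by
    apply Summable.of_nonneg_of_le hF0 ?_ (summable_abs_gl h0 h1)
    intro k
    have : (1/3 : ℝ) ^ k ≤ 1 := pow_le_one₀ (by norm_num) (by norm_num)
    have := abs_nonneg (gl g k)
    simp only [hF]
    nlinarith
  have hGs : Summable G := summable_abs_gl h0 h1
  have hprod : Summable (fun x : ℕ × ℕ => F x.1 * G x.2) :=
    hFs.mul_of_nonneg hGs hF0 hG0
  have hanti : Summable (fun n => ∑ kl ∈ Finset.HasAntidiagonal.antidiagonal n, F kl.1 * G kl.2) :=
    summable_sum_mul_antidiagonal_of_summable_mul hprod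
  apply Summable.of_nonneg_of_le (fun m => abs_nonneg _) ?_ (hanti.mul_left ((3/2:ℝ)^g))
  intro m
  rw [Finset.Nat.sum_antidiagonal_eq_sum_range_succ (fun a b => F a * G b)]
  rw [lub2, abs_mul]
  have hc : |(3/2:ℝ)^g| = (3/2:ℝ)^g := abs_of_nonneg (Real.rpow_nonneg (by norm_num) g)
  rw [hc]
  apply mul_le_mul_of_nonneg_left ?_ (Real.rpow_nonneg (by norm_num) g)
  calc |∑ k ∈ Finset.range (m+1), (1/3:ℝ)^k * gl g k * gl g (m-k)|
      ≤ ∑ k ∈ Finset.range (m+1), |(1/3:ℝ)^k * gl g k * gl g (m-k)| :=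
        Finset.abs_sum_le_sum_abs _ _
    _ = ∑ k ∈ Finset.range (m+1), F k * G (m-k) := by
        apply Finset.sum_congr rfl
        intro k _
        rw [abs_mul, abs_mul]
        simp only [hF, hG]
        rw [_root_.abs_of_nonneg (by positivity : (0:ℝ) ≤ (1/3:ℝ)^k)]

lemma quad_ineq (r c s : ℝ) (hr0 : 0 < r) (hr1 : r < 1) (hc1 : -1 ≤ c) (hc2 : c ≤ 1)
    (hs : s^2 = 1 - c^2) :
    0 ≤ (1 - r*c/3)*(1 - r*c) - (-(r*s/3))*(-(r*s)) := by
  nlinarith [mul_nonneg (mul_nonneg hr0.le (by linarith : (0:ℝ) ≤ 1 - c))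
      (by nlinarith : (0:ℝ) ≤ 2 - (1 + c) * r),
    mul_nonneg (by linarith : (0:ℝ) ≤ 1 - r) (by linarith : (0:ℝ) ≤ 3 - r)]

set_option maxHeartbeats 2000000 in
theorem stmt11 (γ : ℝ) (hγ0 : 0 < γ) (hγ1 : γ < 1) (z : ℝ)
    (hz : z ∈ Set.Icc 0 Real.pi) :
    ∃ S : ℝ,
      HasSum (fun k : ℕ => lub2 γ (k+1) * (Real.cos (((k : ℝ) + 1) * z) - 1)) S ∧
      0 ≤ S := by
  have hc0 : (0:ℝ) ≤ (3/2:ℝ)^γ := Real.rpow_nonneg (by norm_num) γ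
  set F : ℂ → ℂ := fun ζ =>
    ((((3/2:ℝ)^γ : ℝ)) : ℂ) * ((1 - ζ/3) ^ (γ:ℂ) * (1 - ζ) ^ (γ:ℂ)) with hF_def
  set w : ℂ := Complex.exp ((z:ℂ) * Complex.I) with hw_def
  have habsw : ‖w‖ = 1 := Complex.norm_exp_ofReal_mul_I z
  have hlub := summable_abs_lub2 hγ0 hγ1
  have hcosbd : ∀ x : ℝ, |Real.cos x - 1| ≤ 2 := by
    intro x
    have h1 := Real.neg_one_le_cos x
    have h2 := Real.cos_le_one x
    rw [abs_le]; constructor <;> linarith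
  have hsummable : Summable (fun k : ℕ => lub2 γ (k+1) * (Real.cos (((k:ℝ)+1)*z) - 1)) := by
    apply Summable.of_norm_bounded (g := fun k => 2 * |lub2 γ (k+1)|)
      (((summable_nat_add_iff 1).2 hlub).mul_left 2)
    intro k
    rw [Real.norm_eq_abs, abs_mul]
    nlinarith [abs_nonneg (lub2 γ (k+1)), abs_nonneg (Real.cos (((k:ℝ)+1)*z) - 1),
      hcosbd (((k:ℝ)+1)*z)]
  set S : ℝ := ∑' k : ℕ, lub2 γ (k+1) * (Real.cos (((k:ℝ)+1)*z) - 1) with hS_def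
  refine ⟨S, hsummable.hasSum, ?_⟩
  -- key identity for 0 < r < 1
  have hkey : ∀ r ∈ Set.Ioo (0:ℝ) 1,
      HasSum (fun k : ℕ => lub2 γ (k+1) * r^(k+1) * (Real.cos (((k:ℝ)+1)*z) - 1))
        ((F ((r:ℂ)*w)).re - (F ((r:ℂ))).re) := by
    intro r hr
    have habs_rw : ‖(r:ℂ)*w‖ < 1 := by
      rw [norm_mul, habsw, mul_one, Complex.norm_real, Real.norm_eq_abs, abs_of_pos hr.1]; exact hr.2
    have habs_r : ‖(r:ℂ)‖ < 1 := by
      rw [Complex.norm_real, Real.norm_eq_abs, abs_of_pos hr.1]; exact hr.2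
    have h1 := hasSum_lub2_cpow hγ0 hγ1 habs_rw
    have h2 := hasSum_lub2_cpow hγ0 hγ1 habs_r
    have h1re : HasSum (fun m : ℕ => lub2 γ m * r^m * Real.cos ((m:ℝ)*z))
        ((F ((r:ℂ)*w)).re) := by
      have hre := Complex.hasSum_re h1
      apply hre.congr_fun
      intro m
      have hwm : w ^ m = Complex.exp ((((m:ℝ)*z : ℝ) : ℂ) * Complex.I) := by
        rw [hw_def, ← Complex.exp_nat_mul]
        push_cast
        ring_nf
      rw [mul_pow, hwm]
      have : (lub2 γ m : ℂ) * ((r:ℂ)^m * Complex.exp ((((m:ℝ)*z : ℝ) : ℂ) * Complex.I))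
          = (((lub2 γ m * r^m : ℝ)) : ℂ) * Complex.exp ((((m:ℝ)*z : ℝ) : ℂ) * Complex.I) := by
        push_cast; ring
      rw [this, Complex.re_ofReal_mul, Complex.exp_ofReal_mul_I_re]
    have h2re : HasSum (fun m : ℕ => lub2 γ m * r^m) ((F ((r:ℂ))).re) := by
      have hre := Complex.hasSum_re h2
      apply hre.congr_fun
      intro m
      have : (lub2 γ m : ℂ) * (r:ℂ)^m = (((lub2 γ m * r^m : ℝ)) : ℂ) := by push_cast; ring
      rw [this, Complex.ofReal_re]
    have hsub : HasSum (fun m : ℕ => lub2 γ m * r^m * (Real.cos ((m:ℝ)*z) - 1))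
        ((F ((r:ℂ)*w)).re - (F ((r:ℂ))).re) := by
      have := h1re.sub h2re
      apply this.congr_fun
      intro m; ring
    have hshift := (hasSum_nat_add_iff (f := fun m : ℕ => lub2 γ m * r^m *
        (Real.cos ((m:ℝ)*z) - 1)) 1).2 (by simpa using hsub)
    apply hshift.congr_fun
    intro k
    push_cast
    ring_nf
  -- the限 tendsto
  have hIoo : Set.Ioo (0:ℝ) 1 ∈ 𝓝[<] (1:ℝ) :=
    Ioo_mem_nhdsLT_of_mem (by constructor <;> norm_num)
  have hdom : Tendsto (fun r : ℝ =>
      ∑' k : ℕ, lub2 γ (k+1) * r^(k+1) * (Real.cos (((k:ℝ)+1)*z) - 1)) (𝓝[<] (1:ℝ)) (𝓝 S) := by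
    rw [hS_def]
    apply tendsto_tsum_of_dominated_convergence
      (bound := fun k : ℕ => 2 * |lub2 γ (k+1)|)
      (((summable_nat_add_iff 1).2 hlub).mul_left 2)
    · intro k
      have hcont : Continuous (fun r : ℝ =>
          lub2 γ (k+1) * r^(k+1) * (Real.cos (((k:ℝ)+1)*z) - 1)) := by
        continuity
      have := (hcont.tendsto 1).mono_left (nhdsWithin_le_nhds (s := Set.Iio (1:ℝ)))
      simpa using this
    · filter_upwards [hIoo] with r hr
      intro k
      rw [Real.norm_eq_abs, abs_mul, abs_mul]
      have h1 : |r ^ (k+1)| ≤ 1 := by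
        rw [_root_.abs_pow]
        apply pow_le_one₀ (abs_nonneg r)
        rw [abs_of_pos hr.1]; exact hr.2.le
      calc |lub2 γ (k+1)| * |r ^ (k+1)| * |Real.cos (((k:ℝ)+1)*z) - 1|
          ≤ (|lub2 γ (k+1)| * 1) * 2 := by
            apply mul_le_mul ?_ (hcosbd _) (abs_nonneg _) (by positivity)
            exact mul_le_mul_of_nonneg_left h1 (abs_nonneg _)
        _ = 2 * |lub2 γ (k+1)| := by ring
  have hT : Tendsto (fun r : ℝ => (F ((r:ℂ)*w)).re - (F ((r:ℂ))).re) (𝓝[<] (1:ℝ)) (𝓝 S) := by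
    apply hdom.congr'
    filter_upwards [hIoo] with r hr
    exact ((hkey r hr).tsum_eq)
  -- positivity of (F (r w)).re
  have hFpos : ∀ r ∈ Set.Ioo (0:ℝ) 1, 0 ≤ (F ((r:ℂ)*w)).re := by
    intro r hr
    set A : ℂ := 1 - (r:ℂ)*w/3 with hA_def
    set B : ℂ := 1 - (r:ℂ)*w with hB_def
    have hwre : w.re = Real.cos z := Complex.exp_ofReal_mul_I_re z
    have hwim : w.im = Real.sin z := Complex.exp_ofReal_mul_I_im z
    have hrw_re : ((r:ℂ)*w).re = r * Real.cos z := by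
      rw [Complex.re_ofReal_mul, hwre]
    have hrw_im : ((r:ℂ)*w).im = r * Real.sin z := by
      rw [Complex.im_ofReal_mul, hwim]
    have hA_re : A.re = 1 - r * Real.cos z / 3 := by
      rw [hA_def]
      simp [Complex.sub_re, Complex.div_re, hrw_re, hrw_im]
      try ring
    have hA_im : A.im = -(r * Real.sin z / 3) := by
      rw [hA_def]
      simp [Complex.sub_im, Complex.div_im, hrw_re, hrw_im]
      try ring
    have hB_re : B.re = 1 - r * Real.cos z := by
      rw [hB_def]; simp [Complex.sub_re, hrw_re]
    have hB_im : B.im = -(r * Real.sin z) := by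
      rw [hB_def]; simp [Complex.sub_im, hrw_im]
    have hcos1 : -1 ≤ Real.cos z := Real.neg_one_le_cos z
    have hcos2 : Real.cos z ≤ 1 := Real.cos_le_one z
    have hAre : 0 < A.re := by rw [hA_re]; nlinarith [hr.1, hr.2]
    have hBre : 0 < B.re := by rw [hB_re]; nlinarith [hr.1, hr.2]
    have hA0 : A ≠ 0 := by
      intro h; rw [h] at hAre; simp at hAre
    have hB0 : B ≠ 0 := by
      intro h; rw [h] at hBre; simp at hBre
    have hs2 : Real.sin z ^ 2 = 1 - Real.cos z ^ 2 := by
      nlinarith [Real.sin_sq_add_cos_sq z]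
    have hABre : 0 ≤ (A * B).re := by
      rw [Complex.mul_re, hA_re, hA_im, hB_re, hB_im]
      exact quad_ineq r (Real.cos z) (Real.sin z) hr.1 hr.2 hcos1 hcos2 hs2
    have hargA : |A.arg| < Real.pi / 2 := Complex.abs_arg_lt_pi_div_two_iff.2 (Or.inl hAre)
    have hargB : |B.arg| < Real.pi / 2 := Complex.abs_arg_lt_pi_div_two_iff.2 (Or.inl hBre)
    have hargA' := abs_lt.mp hargA
    have hargB' := abs_lt.mp hargB
    have hmem : A.arg + B.arg ∈ Set.Ioc (-Real.pi) Real.pi := by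
      constructor
      · linarith [hargA'.1, hargB'.1]
      · linarith [hargA'.2, hargB'.2]
    have hargmul : (A * B).arg = A.arg + B.arg := Complex.arg_mul hA0 hB0 hmem
    have habsle : |A.arg + B.arg| ≤ Real.pi / 2 := by
      rw [← hargmul]
      exact Complex.abs_arg_le_pi_div_two_iff.2 hABre
    have habsle' := abs_le.mp habsle
    -- rewrite F
    have hFv : F ((r:ℂ)*w) = ((((3/2:ℝ)^γ : ℝ)) : ℂ) *
        Complex.exp (Complex.log A * γ + Complex.log B * γ) := by
      rw [hF_def]
      simp only
      rw [Complex.cpow_def_of_ne_zero hA0, Complex.cpow_def_of_ne_zero hB0, Complex.exp_add]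
    rw [hFv, Complex.re_ofReal_mul, Complex.exp_re]
    have him : (Complex.log A * (γ:ℂ) + Complex.log B * (γ:ℂ)).im
        = (A.arg + B.arg) * γ := by
      simp [Complex.add_im, Complex.mul_im, Complex.log_im]
      ring
    rw [him]
    have hcosnn : 0 ≤ Real.cos ((A.arg + B.arg) * γ) := by
      apply Real.cos_nonneg_of_mem_Icc
      constructor
      · nlinarith [mul_le_mul_of_nonneg_right habsle'.1 hγ0.le, Real.pi_pos]
      · nlinarith [mul_le_mul_of_nonneg_right habsle'.2 hγ0.le, Real.pi_pos]
    positivity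
  -- (F r).re tends to 0
  have hzero : Tendsto (fun r : ℝ => -(F ((r:ℂ))).re) (𝓝[<] (1:ℝ)) (𝓝 0) := by
    apply squeeze_zero_norm'
      (a := fun r : ℝ => (3/2:ℝ)^γ * |1 - r| ^ γ)
    · filter_upwards [hIoo] with r hr
      rw [norm_neg, Real.norm_eq_abs]
      have h1 : |(F ((r:ℂ))).re| ≤ ‖F ((r:ℂ))‖ := Complex.abs_re_le_norm _
      apply h1.trans
      rw [hF_def]
      simp only
      rw [norm_mul, norm_mul, Complex.norm_real, Real.norm_eq_abs, Complex.norm_cpow_real, Complex.norm_cpow_real]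
      have e1 : (1 : ℂ) - (r:ℂ)/3 = (((1 - r/3 : ℝ)) : ℂ) := by push_cast; ring
      have e2 : (1 : ℂ) - (r:ℂ) = (((1 - r : ℝ)) : ℂ) := by push_cast; ring
      rw [e1, e2, Complex.norm_real, Complex.norm_real, Real.norm_eq_abs, Real.norm_eq_abs]
      rw [_root_.abs_of_nonneg hc0]
      have h2 : |1 - r/3| ^ γ ≤ 1 := by
        apply Real.rpow_le_one (abs_nonneg _) ?_ hγ0.le
        rw [abs_le]; constructor <;> nlinarith [hr.1, hr.2]
      have h3 : (0:ℝ) ≤ |1 - r| ^ γ := Real.rpow_nonneg (abs_nonneg _) γ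
      nlinarith [mul_nonneg (mul_nonneg hc0 h3) (sub_nonneg.2 h2)]
    · have h4 : Tendsto (fun r : ℝ => |1 - r|) (𝓝[<] (1:ℝ)) (𝓝 0) := by
        have : Tendsto (fun r : ℝ => |1 - r|) (𝓝 (1:ℝ)) (𝓝 |1 - 1|) :=
          ((continuous_const.sub continuous_id).abs).tendsto 1
        simpa using this.mono_left (nhdsWithin_le_nhds (s := Set.Iio (1:ℝ)))
      have h5 : ContinuousAt (fun x : ℝ => x ^ γ) 0 :=
        Real.continuousAt_rpow_const 0 γ (Or.inr hγ0.le)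
      have h6 : Tendsto (fun r : ℝ => |1 - r| ^ γ) (𝓝[<] (1:ℝ)) (𝓝 0) := by
        have := h5.tendsto.comp h4
        simpa [Real.zero_rpow hγ0.ne', Function.comp_def] using this
      have := h6.const_mul ((3/2:ℝ)^γ)
      simpa using this
  -- conclude
  have hineq : (fun r : ℝ => -(F ((r:ℂ))).re) ≤ᶠ[𝓝[<] (1:ℝ)]
      (fun r : ℝ => (F ((r:ℂ)*w)).re - (F ((r:ℂ))).re) := by
    filter_upwards [hIoo] with r hr
    have := hFpos r hr
    linarith
  have := le_of_tendsto_of_tendsto hzero hT hineq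
  simpa using this
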